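/- Let F be a finite-dimensional inner product space, W ⊆ F a subspace, and A, B : F → F linear operators with A Hermitian, A(W) ⊆ W, B(F) ⊆ W, A invertible with all eigenvalues ≥ 1/d. Suppose f ∈ F satisfies ⟨(A−B)f, (A−B)f⟩ ≤ ε. Then g := A^{-1}Bf lies in W and ⟨f − g, f − g⟩ ≤ d² ε. -/
import Mathlib

open Module

/-- Auxiliary: a symmetric operator with all eigenvalues `≥ c ≥ 0` satisfies
`c * ‖x‖ ≤ ‖A x‖`. -/
lemma symm_eigen_lower_bound {F : Type*} [NormedAddCommGroup F] [InnerProductSpace ℂ F]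
    [FiniteDimensional ℂ F] (A : F →ₗ[ℂ] F) (hA : A.IsSymmetric) {c : ℝ} (hc : 0 ≤ c)
    (heig : ∀ z : ℂ, Module.End.HasEigenvalue A z → ∃ r : ℝ, z = (r : ℂ) ∧ c ≤ r)
    (x : F) : c * ‖x‖ ≤ ‖A x‖ := by
  set n := Module.finrank ℂ F with hn'
  have hn : Module.finrank ℂ F = n := rfl
  set b := hA.eigenvectorBasis hn with hb
  have hev : ∀ i : Fin n, c ≤ hA.eigenvalues hn i := by
    intro i
    obtain ⟨r, hr, hcr⟩ := heig _ (hA.hasEigenvalue_eigenvalues hn i)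
    have : hA.eigenvalues hn i = r := Complex.ofReal_injective hr
    rwa [this]
  have hnorm : ∀ v : F, ‖v‖ ^ 2 = ∑ i, ‖b.repr v i‖ ^ 2 := by
    intro v
    rw [← b.repr.norm_map v, EuclideanSpace.norm_eq, Real.sq_sqrt]
    positivity
  have key : (c * ‖x‖) ^ 2 ≤ ‖A x‖ ^ 2 := by
    rw [mul_pow, hnorm, hnorm, Finset.mul_sum]
    apply Finset.sum_le_sum
    intro i _
    have : b.repr (A x) i = hA.eigenvalues hn i * b.repr x i :=
      hA.eigenvectorBasis_apply_self_apply hn x i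
    rw [this, norm_mul, mul_pow, Complex.norm_real]
    have h1 : c ^ 2 ≤ ‖(hA.eigenvalues hn i : ℝ)‖ ^ 2 := by
      rw [Real.norm_eq_abs]
      have := hev i
      nlinarith [le_abs_self (hA.eigenvalues hn i)]
    nlinarith [sq_nonneg (‖b.repr x i‖), norm_nonneg (b.repr x i)]
  have h1 : 0 ≤ c * ‖x‖ := by positivity
  nlinarith [norm_nonneg (A x)]

/-- abstract core of Theorem 2. If `A` is Hermitian, preserves `W`, `B` maps into
`W`, `A` is invertible with all eigenvalues `≥ 1/d`, and `⟨(A−B)f, (A−B)f⟩ ≤ ε`, then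
`g := A⁻¹ B f` lies in `W` and `⟨f−g, f−g⟩ ≤ d² ε`. -/
theorem approx_discard_core {F : Type*} [NormedAddCommGroup F] [InnerProductSpace ℂ F]
    [FiniteDimensional ℂ F] {d : ℕ} (hd : 0 < d) (ε : ℝ) (hε : 0 ≤ ε)
    (W : Submodule ℂ F) (A B : F →ₗ[ℂ] F) (hA : A.IsSymmetric)
    (hAW : ∀ w ∈ W, A w ∈ W) (hB : ∀ f : F, B f ∈ W)
    (hAbij : Function.Bijective A)
    (heig : ∀ z : ℂ, Module.End.HasEigenvalue A z → ∃ r : ℝ, z = (r : ℂ) ∧ 1 / (d : ℝ) ≤ r)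
    (f : F) (hf : ‖A f - B f‖ ^ 2 ≤ ε) :
    ∃ g : F, A g = B f ∧ g ∈ W ∧ ‖f - g‖ ^ 2 ≤ (d : ℝ) ^ 2 * ε := by
  -- restrict A to W; it is injective hence surjective on finite-dim W
  let A' : W →ₗ[ℂ] W := A.restrict hAW
  have hA'inj : Function.Injective A' := by
    intro x y hxy
    have : A (x : F) = A (y : F) := congrArg Subtype.val hxy
    exact Subtype.ext (hAbij.injective this)
  have hA'surj : Function.Surjective A' :=
    LinearMap.injective_iff_surjective.mp hA'inj
  obtain ⟨g', hg'⟩ := hA'surj ⟨B f, hB f⟩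
  refine ⟨(g' : F), ?_, g'.2, ?_⟩
  · exact congrArg Subtype.val hg'
  · have hAg : A (g' : F) = B f := congrArg Subtype.val hg'
    have hAx : A (f - (g' : F)) = A f - B f := by
      rw [map_sub, hAg]
    have hdpos : (0:ℝ) < (d:ℝ) := by exact_mod_cast hd
    have hc : (0:ℝ) ≤ 1 / (d:ℝ) := by positivity
    have hbound := symm_eigen_lower_bound A hA hc heig (f - (g' : F))
    rw [hAx] at hbound
    have h1 : ‖f - (g' : F)‖ ≤ (d:ℝ) * ‖A f - B f‖ := by
      rw [div_mul_eq_mul_div, one_mul, div_le_iff₀ hdpos] at hbound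
      linarith
    nlinarith [norm_nonneg (f - (g' : F)), norm_nonneg (A f - B f)]
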